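/- Let G be a trivalent, 2-edge-connected finite graph, A ⊆ V(G) with G[A] connected, and v ∈ V−A adjacent to A. Then r*(δ(A ∪ {v})) ≤ r*(δ(A)) + 1, and if equality holds then r_{M_G}(A ∪ {v}) > r_{M_G}(A). -/

import Mathlib

/-- A finite undirected multigraph on vertex type `V` with edge type `E`:
each edge has an unordered pair of endpoints (possibly a loop). -/
structure Multigraph (V E : Type*) where
  ends : E → Sym2 V

namespace Multigraph

variable {V E : Type*} (G : Multigraph V E)

/-- `δ(A)`: the set of edges incident to at least one vertex of `A`. -/
def inc (A : Set V) : Set E := {e | ∃ v ∈ A, v ∈ G.ends e}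

/-- Number of connected components of the spanning subgraph of `G`
with edge set `B` (on the full vertex set `V`). -/
noncomputable def numComponentsEdges (B : Set E) : ℕ :=
  Nat.card (Quot (fun u v : V => ∃ e ∈ B, G.ends e = s(u, v)))

/-- Number of connected components `ω(S)` of the subgraph of `G` induced on `S`. -/
noncomputable def numComponentsSub (S : Set V) : ℕ :=
  Nat.card (Quot (fun x y : S => ∃ e, G.ends e = s(x.1, y.1)))

/-- Rank function of the cycle (graphic) matroid of `G`:
`r(B) = |V| - (number of components of (V, B))`. -/
noncomputable def cycleRank (B : Set E) : ℕ :=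
  Nat.card V - G.numComponentsEdges B

/-- Rank function `r*` of the bond (cographic) matroid of `G`:
`r*(B) = |B| + r(E - B) - r(E)`. -/
noncomputable def bondRank (B : Set E) : ℕ :=
  B.ncard + G.cycleRank Bᶜ - G.cycleRank Set.univ

/-- `G` is connected. -/
def Connected : Prop := G.numComponentsEdges Set.univ = 1

/-- `G` is 2-edge-connected: it is connected and deleting any single edge
leaves it connected. -/
def TwoEdgeConnected : Prop :=
  G.Connected ∧ ∀ e : E, G.numComponentsEdges {e}ᶜ = 1

/-- `G` is 2-vertex-connected: it is connected and deleting any single vertex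
leaves it connected. -/
def TwoVertexConnected : Prop :=
  G.Connected ∧ ∀ v : V, G.numComponentsSub {v}ᶜ = 1

/-- `G` has no loops. -/
def Loopless : Prop := ∀ e : E, ¬ (G.ends e).IsDiag

open Classical in
/-- The degree of a vertex, with loops counting twice. -/
noncomputable def degree [Fintype E] (v : V) : ℕ :=
  ∑ e : E, (if G.ends e = s(v, v) then 2 else if v ∈ G.ends e then 1 else 0)

/-- `G` is trivalent: every vertex has degree `3`. -/
def Trivalent [Fintype E] : Prop := ∀ v : V, G.degree v = 3

/-- `A ⊆ V` is the vertex set of a cycle `v₁, …, vₙ, v₁` of `G`: there are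
pairwise distinct vertices `f 0, …, f (n-1)` with range `A` and pairwise
distinct edges joining cyclically consecutive vertices. -/
def IsCycleSet (A : Set V) : Prop :=
  ∃ n : ℕ, 0 < n ∧ ∃ f : ZMod n → V, Function.Injective f ∧ Set.range f = A ∧
    ∃ e : ZMod n → E, Function.Injective e ∧ ∀ i, G.ends (e i) = s(f i, f (i + 1))

/-- The subgraph induced on `A` contains a cycle. -/
def Cyclic (A : Set V) : Prop := ∃ C ⊆ A, G.IsCycleSet C

/-- The subgraph induced on `A` is acyclic (a forest). -/
def Acyclic (A : Set V) : Prop := ¬ G.Cyclic A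

/-- `A` is a circuit of the graph curve matroid `M_G`: `A` is nonempty,
`r*(δ(A)) ≤ |A|`, and no proper nonempty subset `A'` satisfies `r*(δ(A')) ≤ |A'|`. -/
noncomputable def IsCircuitMG (A : Set V) : Prop :=
  A.Nonempty ∧ G.bondRank (G.inc A) ≤ A.ncard ∧
    ∀ A' : Set V, A' ⊂ A → A'.Nonempty → A'.ncard < G.bondRank (G.inc A')

/-- `A` is dependent in the graph curve matroid `M_G`, i.e. contains a circuit. -/
noncomputable def DepMG (A : Set V) : Prop := ∃ C ⊆ A, G.IsCircuitMG C

/-- `A` is independent in the graph curve matroid `M_G`. -/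
noncomputable def IndepMG (A : Set V) : Prop := ¬ G.DepMG A

/-- The rank function of the graph curve matroid `M_G`:
the maximal cardinality of an independent subset. -/
noncomputable def rankMG (A : Set V) : ℕ :=
  sSup {n | ∃ I ⊆ A, G.IndepMG I ∧ I.ncard = n}

/-- `B` is a basis of the graph curve matroid `M_G`:
a maximal independent set. -/
noncomputable def IsBasisMG (B : Set V) : Prop :=
  G.IndepMG B ∧ ∀ I : Set V, G.IndepMG I → B ⊆ I → I = B

end Multigraph

/-!
Write `B = δ(A)` and `N = δ(v)`, so that `δ(A ∪ {v}) = B ∪ N`. For connected `G`,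
`r*(X) = |X| + 1 - c(E - X)` where `c` counts components of spanning subgraphs; `c` drops by
at most one per added edge and is supermodular, so `r*` is monotone and submodular. An edge `e` from `v` to `A` lies in `B ∩ N`
and `r*({e}) = 1` by 2-edge-connectivity, while `|N| ≤ 3` and `v` is isolated in `E - N`, so
`r*(N) ≤ 2`. Submodularity `r*(B ∪ N) + r*(B ∩ N) ≤ r*(B) + r*(N)` gives the inequality.

If equality holds, no circuit `C ⊆ A ∪ {v}` of `M_G` contains `v`: submodularity for `δ(A)` and
`δ(C)` gives `r*(δ(A) ∩ δ(C)) + 1 ≤ r*(δ(C)) ≤ |C|`, but `δ(A) ∩ δ(C)` contains `e` and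
`δ(C - v)`, and minimality of `C` gives `|C - v| < r*(δ(C - v))`. Hence `v` extends a maximal
independent subset of `A`.
-/

theorem Nat.card_quot_glue_add_one {α : Type*} [Finite α] {a b : α} (hab : a ≠ b) :
    Nat.card (Quot fun p q : α => p = a ∧ q = b) + 1 = Nat.card α := by
  classical
  let g : Quot (fun p q : α => p = a ∧ q = b) → α :=
    Quot.lift (fun x => if x = b then a else x) (by rintro _ _ ⟨rfl, rfl⟩; simp [hab])
  have hglue : Quot.mk (fun p q : α => p = a ∧ q = b) a = Quot.mk _ b := Quot.sound ⟨rfl, rfl⟩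
  have hg : Function.Injective g := by
    rintro ⟨x⟩ ⟨y⟩ hxy
    simp only [g] at hxy
    split_ifs at hxy with hx hy hy <;> subst_vars
    exacts [rfl, hglue.symm, hglue, rfl]
  have hrange : Set.range g = {b}ᶜ := by
    ext q
    refine ⟨?_, fun hq => ⟨Quot.mk _ q, if_neg hq⟩⟩
    rintro ⟨⟨x⟩, rfl⟩
    simp only [g, Set.mem_compl_iff, Set.mem_singleton_iff]
    split_ifs with hx
    exacts [hab, hx]
  rw [← Nat.card_range_of_injective hg, hrange, Nat.card_coe_set_eq, ← Set.ncard_singleton b,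
    Set.ncard_compl_add_ncard]

namespace Multigraph

variable {V E : Type*} (G : Multigraph V E)

def Adj (B : Set E) (u v : V) : Prop := ∃ e ∈ B, G.ends e = s(u, v)

theorem numComponentsEdges_def (B : Set E) :
    G.numComponentsEdges B = Nat.card (Quot (G.Adj B)) := rfl

variable {G}

theorem Adj.mono {B B' : Set E} (h : B ⊆ B') {u v : V} (huv : G.Adj B u v) : G.Adj B' u v :=
  let ⟨e, he, hends⟩ := huv; ⟨e, h he, hends⟩

def quotAdjInsertEquiv {B : Set E} {e : E} {u w : V} (he : G.ends e = s(u, w)) :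
    Quot (G.Adj (insert e B)) ≃
      Quot fun p q : Quot (G.Adj B) => p = Quot.mk _ u ∧ q = Quot.mk _ w where
  toFun := Quot.lift (fun x => Quot.mk _ (Quot.mk _ x)) <| by
    rintro x y ⟨f, rfl | hf, hends⟩
    · rw [he] at hends
      rcases Sym2.eq_iff.mp hends with ⟨rfl, rfl⟩ | ⟨rfl, rfl⟩
      · exact Quot.sound ⟨rfl, rfl⟩
      · exact (Quot.sound ⟨rfl, rfl⟩).symm
    · exact congrArg _ (Quot.sound ⟨f, hf, hends⟩)
  invFun := Quot.lift
    (Quot.lift (Quot.mk _) fun _ _ h => Quot.sound (h.mono (Set.subset_insert e B)))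
    (by rintro _ _ ⟨rfl, rfl⟩; exact Quot.sound ⟨e, Set.mem_insert e B, he⟩)
  left_inv := by rintro ⟨x⟩; rfl
  right_inv := by rintro ⟨⟨x⟩⟩; rfl

theorem numComponentsEdges_insert_of_mk_eq {B : Set E} {e : E} {u w : V}
    (he : G.ends e = s(u, w)) (huw : Quot.mk (G.Adj B) u = Quot.mk _ w) :
    G.numComponentsEdges (insert e B) = G.numComponentsEdges B := by
  rw [numComponentsEdges_def, numComponentsEdges_def, Nat.card_congr (quotAdjInsertEquiv he)]
  refine Nat.card_congr ⟨Quot.lift id ?_, Quot.mk _, ?_, fun _ => rfl⟩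
  · rintro _ _ ⟨rfl, rfl⟩; exact huw
  · rintro ⟨p⟩; rfl

theorem inc_mono : Monotone G.inc := fun _ _ h _ ⟨v, hv, he⟩ => ⟨v, h hv, he⟩

theorem inc_union (X Y : Set V) : G.inc (X ∪ Y) = G.inc X ∪ G.inc Y := by
  ext e
  simp [inc, or_and_right, exists_or]

theorem ncard_inc_singleton_le_degree [Fintype E] (v : V) : (G.inc {v}).ncard ≤ G.degree v := by
  classical
  have : G.inc {v} = ↑(Finset.univ.filter fun e => v ∈ G.ends e) := by
    ext
    simp [inc]
  rw [this, Set.ncard_coe_finset, Finset.card_filter, degree]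
  refine Finset.sum_le_sum fun e _ => ?_
  split_ifs <;> omega

theorem indepMG_empty : G.IndepMG ∅ := fun ⟨_, hC, hCirc⟩ =>
  hCirc.1.ne_empty (Set.subset_empty_iff.mp hC)

variable [Finite V]

theorem numComponentsEdges_anti : Antitone G.numComponentsEdges := by
  intro B B' h
  have : Finite (Quot (G.Adj B)) := Quot.finite _
  rw [numComponentsEdges_def, numComponentsEdges_def]
  refine Nat.card_le_card_of_surjective
    (Quot.lift (Quot.mk _) fun _ _ hxy => Quot.sound (hxy.mono h)) ?_
  rintro ⟨x⟩
  exact ⟨Quot.mk _ x, rfl⟩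

theorem numComponentsEdges_le_card (B : Set E) : G.numComponentsEdges B ≤ Nat.card V :=
  Nat.card_le_card_of_surjective (Quot.mk _) Quot.mk_surjective

theorem numComponentsEdges_insert_add_one_of_mk_ne {B : Set E} {e : E} {u w : V}
    (he : G.ends e = s(u, w)) (huw : Quot.mk (G.Adj B) u ≠ Quot.mk _ w) :
    G.numComponentsEdges (insert e B) + 1 = G.numComponentsEdges B := by
  have : Finite (Quot (G.Adj B)) := Quot.finite _
  rw [numComponentsEdges_def, numComponentsEdges_def, Nat.card_congr (quotAdjInsertEquiv he),
    Nat.card_quot_glue_add_one huw]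

theorem numComponentsEdges_le_insert_add_one (B : Set E) (e : E) :
    G.numComponentsEdges B ≤ G.numComponentsEdges (insert e B) + 1 := by
  induction he : G.ends e using Sym2.ind with | _ u w => ?_
  by_cases huw : Quot.mk (G.Adj B) u = Quot.mk _ w
  · rw [numComponentsEdges_insert_of_mk_eq he huw]; omega
  · rw [numComponentsEdges_insert_add_one_of_mk_ne he huw]

theorem numComponentsEdges_le_union_add_ncard (B S : Set E) (hS : S.Finite) :
    G.numComponentsEdges B ≤ G.numComponentsEdges (B ∪ S) + S.ncard := by
  induction S, hS using Set.Finite.induction_on generalizing B with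
  | empty => simp
  | @insert a S haS hS ih =>
    have := ih (insert a B)
    rw [Set.insert_union, ← Set.union_insert] at this
    rw [Set.ncard_insert_of_notMem haS hS]
    have := G.numComponentsEdges_le_insert_add_one B a
    omega

theorem numComponentsEdges_add_insert_le {B B' : Set E} (h : B' ⊆ B) (e : E) :
    G.numComponentsEdges B + G.numComponentsEdges (insert e B') ≤
      G.numComponentsEdges B' + G.numComponentsEdges (insert e B) := by
  induction he : G.ends e using Sym2.ind with | _ u w => ?_
  by_cases huw : Quot.mk (G.Adj B') u = Quot.mk _ w
  · have huw' : Quot.mk (G.Adj B) u = Quot.mk _ w := by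
      rw [Quot.eq] at huw ⊢
      exact huw.mono fun _ _ hxy => hxy.mono h
    rw [numComponentsEdges_insert_of_mk_eq he huw, numComponentsEdges_insert_of_mk_eq he huw']
    omega
  · have := numComponentsEdges_insert_add_one_of_mk_ne he huw
    have := G.numComponentsEdges_le_insert_add_one B e
    omega

theorem numComponentsEdges_add_union_le {B B' : Set E} (h : B' ⊆ B) (S : Set E)
    (hS : S.Finite) :
    G.numComponentsEdges B + G.numComponentsEdges (B' ∪ S) ≤
      G.numComponentsEdges B' + G.numComponentsEdges (B ∪ S) := by
  induction S, hS using Set.Finite.induction_on generalizing B B' with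
  | empty => simp only [Set.union_empty]; omega
  | @insert a S haS hS ih =>
    have := ih (Set.insert_subset_insert (a := a) h)
    rw [Set.insert_union, Set.insert_union, ← Set.union_insert, ← Set.union_insert] at this
    have := G.numComponentsEdges_add_insert_le h a
    omega

theorem numComponentsEdges_add_le_union_add_inter [Finite E] (X Y : Set E) :
    G.numComponentsEdges X + G.numComponentsEdges Y ≤
      G.numComponentsEdges (X ∪ Y) + G.numComponentsEdges (X ∩ Y) := by
  have := G.numComponentsEdges_add_union_le (B := X) (B' := X ∩ Y) Set.inter_subset_left Y
    Y.toFinite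
  rwa [Set.union_eq_right.mpr Set.inter_subset_right,
    add_comm (G.numComponentsEdges (X ∩ Y))] at this

theorem two_le_numComponentsEdges {B : Set E} {v w : V} (hB : ∀ e ∈ B, v ∉ G.ends e)
    (hwv : w ≠ v) : 2 ≤ G.numComponentsEdges B := by
  have : Finite (Quot (G.Adj B)) := Quot.finite _
  have hresp : ∀ x y, G.Adj B x y → (x = v) = (y = v) := by
    rintro x y ⟨e, he, hends⟩
    have := hB e he
    simp only [hends, Sym2.mem_iff, not_or] at this
    simp [Ne.symm this.1, Ne.symm this.2]
  have hne : Quot.mk (G.Adj B) w ≠ Quot.mk _ v := fun h =>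
    hwv ((congrArg (Quot.lift (· = v) hresp) h).mpr rfl)
  have : Nontrivial (Quot (G.Adj B)) := ⟨_, _, hne⟩
  exact (numComponentsEdges_def G B).symm ▸ Finite.one_lt_card

section BondRank

variable [Finite E]

theorem bondRank_add_numComponentsEdges_compl (hG : G.Connected) (B : Set E) :
    G.bondRank B + G.numComponentsEdges Bᶜ = B.ncard + 1 := by
  have hG : G.numComponentsEdges Set.univ = 1 := hG
  have hpos : 1 ≤ G.numComponentsEdges Bᶜ := hG ▸ numComponentsEdges_anti (Set.subset_univ _)
  have hle := G.numComponentsEdges_le_card Bᶜ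
  have hadd := G.numComponentsEdges_le_union_add_ncard Bᶜ B B.toFinite
  rw [Set.compl_union_self, hG] at hadd
  unfold bondRank cycleRank
  rw [hG]
  omega

theorem bondRank_mono (hG : G.Connected) : Monotone G.bondRank := by
  intro X Y h
  have hX := bondRank_add_numComponentsEdges_compl hG X
  have hY := bondRank_add_numComponentsEdges_compl hG Y
  have hc := G.numComponentsEdges_le_union_add_ncard Yᶜ (Y \ X) (Set.toFinite _)
  have hXY : Yᶜ ∪ Y \ X = Xᶜ := by
    ext e
    by_cases heX : e ∈ X
    · simp [heX, h heX]
    · simp [heX, em']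
  rw [hXY] at hc
  have := Set.ncard_sdiff_add_ncard_of_subset h
  omega

theorem bondRank_union_add_inter_le (hG : G.Connected) (X Y : Set E) :
    G.bondRank (X ∪ Y) + G.bondRank (X ∩ Y) ≤ G.bondRank X + G.bondRank Y := by
  have := bondRank_add_numComponentsEdges_compl hG X
  have := bondRank_add_numComponentsEdges_compl hG Y
  have := bondRank_add_numComponentsEdges_compl hG (X ∪ Y)
  have := bondRank_add_numComponentsEdges_compl hG (X ∩ Y)
  have hsup := G.numComponentsEdges_add_le_union_add_inter Xᶜ Yᶜ
  rw [← Set.compl_inter, ← Set.compl_union] at hsup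
  have := Set.ncard_union_add_ncard_inter X Y
  omega

theorem bondRank_singleton (hG : G.TwoEdgeConnected) (e : E) : G.bondRank {e} = 1 := by
  have := bondRank_add_numComponentsEdges_compl hG.1 {e}
  rw [hG.2 e, Set.ncard_singleton] at this
  omega

end BondRank

theorem bondRank_inc_singleton_le_two [Fintype E] (hG : G.Connected)
    (h3 : G.Trivalent) {v w : V} (hwv : w ≠ v) : G.bondRank (G.inc {v}) ≤ 2 := by
  have := bondRank_add_numComponentsEdges_compl hG (G.inc {v})
  have := two_le_numComponentsEdges (B := (G.inc {v})ᶜ) (fun e he hve => he ⟨v, rfl, hve⟩) hwv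
  have := (G.ncard_inc_singleton_le_degree v).trans_eq (h3 v)
  omega

theorem bddAbove_ncard_indepMG (A : Set V) :
    BddAbove {n | ∃ I ⊆ A, G.IndepMG I ∧ I.ncard = n} :=
  ⟨Nat.card V, by rintro _ ⟨I, -, -, rfl⟩; exact Set.ncard_le_card I⟩

theorem ncard_le_rankMG {A I : Set V} (hIA : I ⊆ A) (hI : G.IndepMG I) :
    I.ncard ≤ G.rankMG A :=
  le_csSup (G.bddAbove_ncard_indepMG A) ⟨I, hIA, hI, rfl⟩

theorem exists_indepMG_ncard_eq_rankMG (A : Set V) :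
    ∃ I ⊆ A, G.IndepMG I ∧ I.ncard = G.rankMG A :=
  Nat.sSup_mem (s := {n | ∃ I ⊆ A, G.IndepMG I ∧ I.ncard = n})
    ⟨0, ∅, Set.empty_subset A, G.indepMG_empty, Set.ncard_empty V⟩ (G.bddAbove_ncard_indepMG A)

theorem rankMG_lt_rankMG_union_singleton {A : Set V} {v : V} (hv : v ∉ A)
    (hcirc : ∀ C ⊆ A ∪ {v}, v ∈ C → ¬ G.IsCircuitMG C) : G.rankMG A < G.rankMG (A ∪ {v}) := by
  obtain ⟨I, hIA, hI, hIr⟩ := G.exists_indepMG_ncard_eq_rankMG A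
  have hvI : v ∉ I := fun h => hv (hIA h)
  have hIvA : insert v I ⊆ A ∪ {v} := by
    rw [Set.union_singleton]
    exact Set.insert_subset_insert hIA
  have hIv : G.IndepMG (insert v I) := by
    rintro ⟨C, hCI, hC⟩
    by_cases hvC : v ∈ C
    · exact hcirc C (hCI.trans hIvA) hvC hC
    · exact hI ⟨C, (Set.subset_insert_iff_of_notMem hvC).mp hCI, hC⟩
  calc G.rankMG A < (insert v I).ncard := by rw [Set.ncard_insert_of_notMem hvI]; omega
    _ ≤ G.rankMG (A ∪ {v}) := G.ncard_le_rankMG hIvA hIv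

theorem not_isCircuitMG_of_bondRank_inc_union_singleton_eq [Finite E]
    (hG : G.Connected) {A C : Set V} {v : V} (hCA : C ⊆ A ∪ {v}) (hvC : v ∈ C)
    (hAv : 1 ≤ G.bondRank (G.inc A ∩ G.inc {v}))
    (heq : G.bondRank (G.inc (A ∪ {v})) = G.bondRank (G.inc A) + 1) :
    ¬ G.IsCircuitMG C := by
  rintro ⟨-, hCle, hCmin⟩
  have hAC : A ∪ C = A ∪ {v} :=
    (Set.union_subset Set.subset_union_left hCA).antisymm
      (Set.union_subset_union_right A (Set.singleton_subset_iff.mpr hvC))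
  have hsub := G.bondRank_union_add_inter_le hG (G.inc A) (G.inc C)
  rw [← inc_union, hAC, heq] at hsub
  have hkey : (C \ {v}).ncard < G.bondRank (G.inc A ∩ G.inc C) := by
    rcases (C \ {v}).eq_empty_or_nonempty with hempty | hne
    · rw [hempty, Set.ncard_empty]
      exact hAv.trans (bondRank_mono hG (Set.inter_subset_inter_right _
        (inc_mono (Set.singleton_subset_iff.mpr hvC))))
    · have hCvA : C \ {v} ⊆ A := fun x ⟨hxC, hxv⟩ => (hCA hxC).resolve_right hxv
      exact (hCmin _ (Set.sdiff_singleton_ssubset.mpr hvC) hne).trans_le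
        (bondRank_mono hG (Set.subset_inter (inc_mono hCvA) (inc_mono Set.sdiff_subset)))
  have := Set.ncard_sdiff_singleton_add_one hvC
  omega

end Multigraph

theorem bondRank_inc_insert_adjacent_general {V E : Type*} [Fintype V] [Fintype E]
    (G : Multigraph V E) (h3 : G.Trivalent) (h2 : G.TwoEdgeConnected)
    (A : Set V)
    (v : V) (hv : v ∉ A) (hadj : ∃ e : E, ∃ a ∈ A, G.ends e = s(v, a)) :
    G.bondRank (G.inc (A ∪ {v})) ≤ G.bondRank (G.inc A) + 1 ∧
    (G.bondRank (G.inc (A ∪ {v})) = G.bondRank (G.inc A) + 1 →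
      G.rankMG A < G.rankMG (A ∪ {v})) := by
  obtain ⟨e, a, ha, he⟩ := hadj
  have hav : a ≠ v := fun h => hv (h ▸ ha)
  have heA : e ∈ G.inc A := ⟨a, ha, he ▸ Sym2.mem_mk_right v a⟩
  have hev : e ∈ G.inc {v} := ⟨v, rfl, he ▸ Sym2.mem_mk_left v a⟩
  have hAv : 1 ≤ G.bondRank (G.inc A ∩ G.inc {v}) :=
    G.bondRank_singleton h2 e ▸ G.bondRank_mono h2.1 (Set.singleton_subset_iff.mpr ⟨heA, hev⟩)
  have hstar := G.bondRank_inc_singleton_le_two h2.1 h3 hav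
  have hsub := G.bondRank_union_add_inter_le h2.1 (G.inc A) (G.inc {v})
  rw [← Multigraph.inc_union] at hsub
  refine ⟨by omega, fun heq => G.rankMG_lt_rankMG_union_singleton hv fun C hCA hvC => ?_⟩
  exact G.not_isCircuitMG_of_bondRank_inc_union_singleton_eq h2.1 hCA hvC hAv heq

/-- Let `G` be trivalent and 2-edge-connected, `A ⊆ V` with
`G[A]` connected, and `v ∈ V - A` adjacent to `A`. Then
`r*(δ(A ∪ {v})) ≤ r*(δ(A)) + 1`, and if equality holds then
`r_{M_G}(A ∪ {v}) > r_{M_G}(A)`. -/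
theorem bondRank_inc_insert_adjacent {V E : Type*} [Fintype V] [Fintype E]
    (G : Multigraph V E) (h3 : G.Trivalent) (h2 : G.TwoEdgeConnected)
    (A : Set V) (hA : G.numComponentsSub A = 1)
    (v : V) (hv : v ∉ A) (hadj : ∃ e : E, ∃ a ∈ A, G.ends e = s(v, a)) :
    G.bondRank (G.inc (A ∪ {v})) ≤ G.bondRank (G.inc A) + 1 ∧
    (G.bondRank (G.inc (A ∪ {v})) = G.bondRank (G.inc A) + 1 →
      G.rankMG A < G.rankMG (A ∪ {v})) :=
  bondRank_inc_insert_adjacent_general G h3 h2 A v hv hadj
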